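/- (Lemma 6.) Let M ∈ ℝ^{m×n} have rank ρ with SVD M = UΣVᵀ. Let Ω ⊆ [m]×[n] with weights p_ij ∈ (0,1], and suppose ‖P_T R_Ω P_T − P_T‖_op < 1. Then for every Z ∈ ℝ^{m×n} with Z_ij = 0 for all (i,j) ∈ Ω, ‖P_T(Z)‖_F ≤ (1 − ‖P_T R_Ω P_T − P_T‖_op)^{−1/2} · ( max_{(i,j) ∈ [m]×[n]} 1/√(p_ij) ) · ‖P_{T⊥}(Z)‖_*. -/

import Mathlib

open Matrix

noncomputable def frobNorm {m n : ℕ} (X : Matrix (Fin m) (Fin n) ℝ) : ℝ :=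
  Real.sqrt (∑ i, ∑ j, X i j ^ 2)

/-- Operator norm of a map on matrices, with respect to the Frobenius norm. -/
noncomputable def opNorm {m n : ℕ}
    (A : Matrix (Fin m) (Fin n) ℝ → Matrix (Fin m) (Fin n) ℝ) : ℝ :=
  ⨆ X, frobNorm (A X) / frobNorm X

/-- The nuclear norm `‖X‖_* = Tr((XᵀX)^{1/2})`, i.e. the sum of the singular values of `X`. -/
noncomputable def nuclearNorm {m n : ℕ} (X : Matrix (Fin m) (Fin n) ℝ) : ℝ :=
  ((Matrix.posSemidef_conjTranspose_mul_self X).1.eigenvectorUnitary.1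
    * diagonal (((↑) : ℝ → ℝ) ∘ Real.sqrt ∘ (Matrix.posSemidef_conjTranspose_mul_self X).1.eigenvalues)
    * (star (Matrix.posSemidef_conjTranspose_mul_self X).1.eigenvectorUnitary : Matrix (Fin n) (Fin n) ℝ)).trace

/-- The orthogonal projection `P_T(X) = UUᵀX + XVVᵀ − UUᵀXVVᵀ`. -/
noncomputable def PT {m n ρ : ℕ} (U : Matrix (Fin m) (Fin ρ) ℝ) (V : Matrix (Fin n) (Fin ρ) ℝ)
    (X : Matrix (Fin m) (Fin n) ℝ) : Matrix (Fin m) (Fin n) ℝ :=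
  U * Uᵀ * X + X * (V * Vᵀ) - U * Uᵀ * X * (V * Vᵀ)

open Classical in
/-- The sampling operator `R_Ω(X) = ∑_{(i,j)∈Ω} (1/p_ij) X_ij e_i e_jᵀ`. -/
noncomputable def RΩ {m n : ℕ} (Ω : Set (Fin m × Fin n)) (p : Fin m → Fin n → ℝ)
    (X : Matrix (Fin m) (Fin n) ℝ) : Matrix (Fin m) (Fin n) ℝ :=
  fun i j => if (i, j) ∈ Ω then (p i j)⁻¹ * X i j else 0

/-!
Write `W = P_T Z` and `Y = P_{T⊥} Z = Z - W`, and let `δ = ‖P_T R_Ω P_T − P_T‖_op`. Since `P_T` is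
a self-adjoint projection fixing `W`, `⟨W, R_Ω W⟩ = ⟨W, P_T R_Ω P_T W⟩ ≥ (1 − δ) ‖W‖_F²`. Because
`Z` vanishes on `Ω`, `W = -Y` there, and `R_Ω` only sees entries in `Ω`, so
`⟨W, R_Ω W⟩ = ⟨Y, R_Ω Y⟩ ≤ (max 1/p_ij) ‖Y‖_F² ≤ (max 1/p_ij) ‖Y‖_*²`.
-/

section FrobeniusSampling

variable {m n ρ : ℕ}

/-- Flattening identifies `frobNorm` with the Euclidean norm, which supplies the inner product,
Cauchy–Schwarz and the boundedness of linear maps. -/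
def frobFlat : Matrix (Fin m) (Fin n) ℝ ≃ₗ[ℝ] EuclideanSpace ℝ (Fin m × Fin n) :=
  (LinearEquiv.curry ℝ ℝ (Fin m) (Fin n)).symm ≪≫ₗ (WithLp.linearEquiv 2 ℝ _).symm

@[simp]
lemma frobFlat_apply (X : Matrix (Fin m) (Fin n) ℝ) (q : Fin m × Fin n) :
    frobFlat X q = X q.1 q.2 := rfl

lemma frobNorm_eq_norm_frobFlat (X : Matrix (Fin m) (Fin n) ℝ) :
    frobNorm X = ‖frobFlat X‖ := by
  simp [frobNorm, EuclideanSpace.norm_eq, Fintype.sum_prod_type]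

lemma frobNorm_nonneg (X : Matrix (Fin m) (Fin n) ℝ) : 0 ≤ frobNorm X := Real.sqrt_nonneg _

noncomputable def frobInner (X Y : Matrix (Fin m) (Fin n) ℝ) : ℝ :=
  inner ℝ (frobFlat X) (frobFlat Y)

lemma frobInner_eq_sum (X Y : Matrix (Fin m) (Fin n) ℝ) :
    frobInner X Y = ∑ i, ∑ j, X i j * Y i j := by
  simp [frobInner, PiLp.inner_apply, Fintype.sum_prod_type, mul_comm]

lemma frobInner_eq_trace (X Y : Matrix (Fin m) (Fin n) ℝ) :
    frobInner X Y = trace (Xᵀ * Y) := by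
  rw [frobInner_eq_sum, trace, Finset.sum_comm]
  simp [mul_apply]

lemma frobNorm_sq (X : Matrix (Fin m) (Fin n) ℝ) : frobNorm X ^ 2 = frobInner X X := by
  rw [frobInner, real_inner_self_eq_norm_sq, frobNorm_eq_norm_frobFlat]

lemma neg_frobNorm_mul_le_frobInner (X Y : Matrix (Fin m) (Fin n) ℝ) :
    -(frobNorm X * frobNorm Y) ≤ frobInner X Y := by
  rw [frobNorm_eq_norm_frobFlat, frobNorm_eq_norm_frobFlat]
  exact neg_le_of_abs_le (abs_real_inner_le_norm _ _)

lemma frobInner_add_left (X Y Z : Matrix (Fin m) (Fin n) ℝ) :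
    frobInner (X + Y) Z = frobInner X Z + frobInner Y Z := by
  simp [frobInner, inner_add_left]

lemma frobInner_sub_left (X Y Z : Matrix (Fin m) (Fin n) ℝ) :
    frobInner (X - Y) Z = frobInner X Z - frobInner Y Z := by
  simp [frobInner, inner_sub_left]

lemma frobInner_add_right (X Y Z : Matrix (Fin m) (Fin n) ℝ) :
    frobInner X (Y + Z) = frobInner X Y + frobInner X Z := by
  simp [frobInner, inner_add_right]

lemma frobInner_sub_right (X Y Z : Matrix (Fin m) (Fin n) ℝ) :
    frobInner X (Y - Z) = frobInner X Y - frobInner X Z := by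
  simp [frobInner, inner_sub_right]

lemma frobInner_mul_left {k : ℕ} (X : Matrix (Fin m) (Fin n) ℝ) (A : Matrix (Fin m) (Fin k) ℝ)
    (Y : Matrix (Fin k) (Fin n) ℝ) : frobInner X (A * Y) = frobInner (Aᵀ * X) Y := by
  simp only [frobInner_eq_trace, transpose_mul, transpose_transpose, Matrix.mul_assoc]

lemma frobInner_mul_right {k : ℕ} (X : Matrix (Fin m) (Fin n) ℝ) (Y : Matrix (Fin m) (Fin k) ℝ)
    (B : Matrix (Fin k) (Fin n) ℝ) : frobInner X (Y * B) = frobInner (X * Bᵀ) Y := by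
  simp only [frobInner_eq_trace, transpose_mul, transpose_transpose]
  rw [← Matrix.mul_assoc, trace_mul_comm, Matrix.mul_assoc]

/-- `opNorm` is an `iSup` in `ℝ`, hence junk unless the ratios are bounded; finite dimensionality
bounds them. -/
lemma frobNorm_apply_le_opNorm_mul
    (A : Matrix (Fin m) (Fin n) ℝ →ₗ[ℝ] Matrix (Fin m) (Fin n) ℝ) (X : Matrix (Fin m) (Fin n) ℝ) :
    frobNorm (A X) ≤ opNorm A * frobNorm X := by
  set B := LinearMap.toContinuousLinearMap (frobFlat.conj A)
  have hB : ∀ X, frobNorm (A X) ≤ ‖B‖ * frobNorm X := fun X => by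
    simpa [B, frobNorm_eq_norm_frobFlat, LinearEquiv.conj_apply] using B.le_opNorm (frobFlat X)
  have hbdd : BddAbove (Set.range fun X => frobNorm (A X) / frobNorm X) :=
    ⟨‖B‖, Set.forall_mem_range.2 fun X =>
      div_le_of_le_mul₀ (frobNorm_nonneg X) (norm_nonneg B) (hB X)⟩
  rcases (frobNorm_nonneg X).eq_or_lt with hX | hX
  · simpa [← hX] using hB X
  · exact (div_le_iff₀ hX).1 (le_ciSup hbdd X)

section Projection

variable {U : Matrix (Fin m) (Fin ρ) ℝ} {V : Matrix (Fin n) (Fin ρ) ℝ}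

lemma PT_PT (hU : Uᵀ * U = 1) (hV : Vᵀ * V = 1) (X : Matrix (Fin m) (Fin n) ℝ) :
    PT U V (PT U V X) = PT U V X := by
  have hU' : ∀ {k} (Y : Matrix (Fin ρ) (Fin k) ℝ), Uᵀ * (U * Y) = Y := fun Y => by
    rw [← Matrix.mul_assoc, hU, Matrix.one_mul]
  have hV' : ∀ {k} (Y : Matrix (Fin ρ) (Fin k) ℝ), Vᵀ * (V * Y) = Y := fun Y => by
    rw [← Matrix.mul_assoc, hV, Matrix.one_mul]
  simp only [PT, Matrix.mul_add, Matrix.add_mul, Matrix.mul_sub, Matrix.sub_mul,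
    Matrix.mul_assoc, hU', hV']
  abel

lemma frobInner_PT (X Y : Matrix (Fin m) (Fin n) ℝ) :
    frobInner X (PT U V Y) = frobInner (PT U V X) Y := by
  have hUU : (U * Uᵀ)ᵀ = U * Uᵀ := by rw [transpose_mul, transpose_transpose]
  have hVV : (V * Vᵀ)ᵀ = V * Vᵀ := by rw [transpose_mul, transpose_transpose]
  rw [PT, frobInner_sub_right, frobInner_add_right, frobInner_mul_left X (U * Uᵀ) Y,
    frobInner_mul_right X Y (V * Vᵀ), frobInner_mul_right X (U * Uᵀ * Y) (V * Vᵀ),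
    frobInner_mul_left _ (U * Uᵀ) Y, hUU, hVV, PT, frobInner_sub_left, frobInner_add_left,
    Matrix.mul_assoc (U * Uᵀ) X]

variable (U V) in
noncomputable def PTLin : Matrix (Fin m) (Fin n) ℝ →ₗ[ℝ] Matrix (Fin m) (Fin n) ℝ where
  toFun := PT U V
  map_add' X Y := by simp only [PT, Matrix.mul_add, Matrix.add_mul]; abel
  map_smul' c X := by
    simp only [PT, Matrix.mul_smul, Matrix.smul_mul, RingHom.id_apply, smul_add, smul_sub]

end Projection

section Sampling

variable {Ω : Set (Fin m × Fin n)} {p : Fin m → Fin n → ℝ}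

variable (Ω p) in
noncomputable def RΩLin : Matrix (Fin m) (Fin n) ℝ →ₗ[ℝ] Matrix (Fin m) (Fin n) ℝ where
  toFun := RΩ Ω p
  map_add' X Y := by ext i j; simp only [RΩ, Matrix.add_apply]; split_ifs <;> ring
  map_smul' c X := by
    ext i j
    simp only [RΩ, Matrix.smul_apply, smul_eq_mul, RingHom.id_apply]
    split_ifs <;> ring

lemma frobInner_RΩ_self_eq_of_eq_neg {X Y : Matrix (Fin m) (Fin n) ℝ}
    (h : ∀ i j, (i, j) ∈ Ω → X i j = -Y i j) :
    frobInner X (RΩ Ω p X) = frobInner Y (RΩ Ω p Y) := by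
  simp only [frobInner_eq_sum, RΩ]
  refine Finset.sum_congr rfl fun i _ => Finset.sum_congr rfl fun j _ => ?_
  split_ifs with hij
  · rw [h i j hij]; ring
  · simp

lemma frobInner_RΩ_self_le {c : ℝ} (hc : 0 ≤ c) (hpc : ∀ i j, (i, j) ∈ Ω → (p i j)⁻¹ ≤ c)
    (X : Matrix (Fin m) (Fin n) ℝ) : frobInner X (RΩ Ω p X) ≤ c * frobNorm X ^ 2 := by
  simp only [frobNorm_sq, frobInner_eq_sum, RΩ, Finset.mul_sum]
  refine Finset.sum_le_sum fun i _ => Finset.sum_le_sum fun j _ => ?_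
  split_ifs with hij
  · nlinarith [hpc i j hij, mul_self_nonneg (X i j)]
  · simpa using mul_nonneg hc (mul_self_nonneg (X i j))

end Sampling

lemma nuclearNorm_eq_sum_sqrt_eigenvalues (X : Matrix (Fin m) (Fin n) ℝ) :
    nuclearNorm X = ∑ k, √((posSemidef_conjTranspose_mul_self X).1.eigenvalues k) := by
  set hH := (posSemidef_conjTranspose_mul_self X).1
  have hunit : (star hH.eigenvectorUnitary : Matrix (Fin n) (Fin n) ℝ)
      * hH.eigenvectorUnitary = 1 := by simp
  rw [nuclearNorm, trace_mul_comm, ← Matrix.mul_assoc, hunit, Matrix.one_mul, trace_diagonal]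
  rfl

lemma nuclearNorm_nonneg (X : Matrix (Fin m) (Fin n) ℝ) : 0 ≤ nuclearNorm X := by
  rw [nuclearNorm_eq_sum_sqrt_eigenvalues]
  exact Finset.sum_nonneg fun k _ => Real.sqrt_nonneg _

lemma frobNorm_sq_eq_sum_eigenvalues (X : Matrix (Fin m) (Fin n) ℝ) :
    frobNorm X ^ 2 = ∑ k, (posSemidef_conjTranspose_mul_self X).1.eigenvalues k := by
  rw [frobNorm_sq, frobInner_eq_trace, ← conjTranspose_eq_transpose_of_trivial,
    (posSemidef_conjTranspose_mul_self X).1.trace_eq_sum_eigenvalues]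
  rfl

lemma frobNorm_le_nuclearNorm (X : Matrix (Fin m) (Fin n) ℝ) : frobNorm X ≤ nuclearNorm X := by
  set ev := (posSemidef_conjTranspose_mul_self X).1.eigenvalues
  have hev : ∀ k, 0 ≤ ev k := (posSemidef_conjTranspose_mul_self X).eigenvalues_nonneg
  rw [← pow_le_pow_iff_left₀ (frobNorm_nonneg X) (nuclearNorm_nonneg X) two_ne_zero,
    frobNorm_sq_eq_sum_eigenvalues, nuclearNorm_eq_sum_sqrt_eigenvalues]
  calc ∑ k, ev k = ∑ k, √(ev k) ^ 2 := by simp only [Real.sq_sqrt (hev _)]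
    _ ≤ (∑ k, √(ev k)) ^ 2 := Finset.sum_sq_le_sq_sum_of_nonneg fun k _ => Real.sqrt_nonneg _

lemma one_sub_opNorm_mul_frobNorm_sq_le {U : Matrix (Fin m) (Fin ρ) ℝ}
    {V : Matrix (Fin n) (Fin ρ) ℝ} {Ω : Set (Fin m × Fin n)} {p : Fin m → Fin n → ℝ}
    {W : Matrix (Fin m) (Fin n) ℝ} (hW : PT U V W = W) :
    (1 - opNorm (fun X => PT U V (RΩ Ω p (PT U V X)) - PT U V X)) * frobNorm W ^ 2
      ≤ frobInner W (RΩ Ω p W) := by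
  set δ := opNorm (fun X => PT U V (RΩ Ω p (PT U V X)) - PT U V X)
  set D := PT U V (RΩ Ω p W) - W
  have hD : frobNorm D ≤ δ * frobNorm W := by
    have h := frobNorm_apply_le_opNorm_mul (PTLin U V ∘ₗ RΩLin Ω p ∘ₗ PTLin U V - PTLin U V) W
    change frobNorm (PT U V (RΩ Ω p (PT U V W)) - PT U V W) ≤ δ * frobNorm W at h
    rwa [hW] at h
  have hWD : frobInner W D = frobInner W (RΩ Ω p W) - frobNorm W ^ 2 := by
    rw [frobInner_sub_right, frobInner_PT, hW, frobNorm_sq]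
  nlinarith [neg_frobNorm_mul_le_frobInner W D, mul_le_mul_of_nonneg_left hD (frobNorm_nonneg W)]

lemma inv_le_sq_iSup_one_div_sqrt {p : Fin m → Fin n → ℝ} (hp : ∀ i j, 0 < p i j) (i : Fin m)
    (j : Fin n) : (p i j)⁻¹ ≤ (⨆ i, ⨆ j, 1 / √(p i j)) ^ 2 := by
  have hle : 1 / √(p i j) ≤ ⨆ i, ⨆ j, 1 / √(p i j) :=
    (le_ciSup (f := fun j => 1 / √(p i j)) (Set.finite_range _).bddAbove j).trans
      (le_ciSup (f := fun i => ⨆ j, 1 / √(p i j)) (Set.finite_range _).bddAbove i)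
  calc (p i j)⁻¹ = (1 / √(p i j)) ^ 2 := by
        rw [div_pow, one_pow, Real.sq_sqrt (hp i j).le, one_div]
    _ ≤ _ := pow_le_pow_left₀ (by positivity) hle 2

lemma le_inv_sqrt_mul_of_mul_sq_le {ε a b : ℝ} (hε : 0 < ε) (hb : 0 ≤ b)
    (h : ε * a ^ 2 ≤ b ^ 2) : a ≤ (√ε)⁻¹ * b := by
  rw [inv_mul_eq_div, le_div_iff₀ (Real.sqrt_pos.2 hε), mul_comm]
  refine (le_abs_self _).trans (abs_le_of_sq_le_sq ?_ hb)
  rwa [mul_pow, Real.sq_sqrt hε.le]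

end FrobeniusSampling

theorem stmt_9_general (m n ρ : ℕ)
    (U : Matrix (Fin m) (Fin ρ) ℝ) (V : Matrix (Fin n) (Fin ρ) ℝ)
    (hU : Uᵀ * U = 1) (hV : Vᵀ * V = 1)
    (Ω : Set (Fin m × Fin n)) (p : Fin m → Fin n → ℝ)
    (hp0 : ∀ i j, 0 < p i j)
    (hop : opNorm (fun X => PT U V (RΩ Ω p (PT U V X)) - PT U V X) < 1) :
    ∀ Z : Matrix (Fin m) (Fin n) ℝ, (∀ i j, (i, j) ∈ Ω → Z i j = 0) →
      frobNorm (PT U V Z)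
        ≤ (Real.sqrt (1 - opNorm (fun X => PT U V (RΩ Ω p (PT U V X)) - PT U V X)))⁻¹
          * (⨆ i : Fin m, ⨆ j : Fin n, 1 / Real.sqrt (p i j))
          * nuclearNorm (Z - PT U V Z) := by
  intro Z hZ
  set C := ⨆ i : Fin m, ⨆ j : Fin n, 1 / √(p i j)
  have hC : 0 ≤ C := Real.iSup_nonneg fun i => Real.iSup_nonneg fun j => by positivity
  set W := PT U V Z
  set Y := Z - W
  have hWY : ∀ i j, (i, j) ∈ Ω → W i j = -Y i j := fun i j hij => by simp [Y, hZ i j hij]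
  rw [mul_assoc]
  refine le_inv_sqrt_mul_of_mul_sq_le (sub_pos.2 hop) (mul_nonneg hC (nuclearNorm_nonneg Y)) ?_
  calc _ ≤ frobInner W (RΩ Ω p W) := one_sub_opNorm_mul_frobNorm_sq_le (PT_PT hU hV Z)
    _ = frobInner Y (RΩ Ω p Y) := frobInner_RΩ_self_eq_of_eq_neg hWY
    _ ≤ C ^ 2 * frobNorm Y ^ 2 :=
        frobInner_RΩ_self_le (sq_nonneg C) (fun i j _ => inv_le_sq_iSup_one_div_sqrt hp0 i j) Y
    _ ≤ (C * nuclearNorm Y) ^ 2 := by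
        rw [mul_pow]
        exact mul_le_mul_of_nonneg_left
          (pow_le_pow_left₀ (frobNorm_nonneg Y) (frobNorm_le_nuclearNorm Y) 2) (sq_nonneg C)

/-- (Lemma 6.) Let `M = UΣVᵀ ∈ ℝ^{m×n}` have rank `ρ`, `Ω ⊆ [m]×[n]` with weights
`p_ij ∈ (0,1]`, and suppose `‖P_T R_Ω P_T − P_T‖_op < 1`. Then for every `Z` vanishing on `Ω`,
`‖P_T(Z)‖_F ≤ (1 − ‖P_T R_Ω P_T − P_T‖_op)^{−1/2} · (max_{i,j} 1/√p_ij) · ‖P_{T⊥}(Z)‖_*`. -/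
theorem stmt_9 (m n ρ : ℕ) (hm : 0 < m) (hn : 0 < n)
    (M : Matrix (Fin m) (Fin n) ℝ) (hrank : M.rank = ρ)
    (U : Matrix (Fin m) (Fin ρ) ℝ) (V : Matrix (Fin n) (Fin ρ) ℝ) (σ : Fin ρ → ℝ)
    (hU : Uᵀ * U = 1) (hV : Vᵀ * V = 1) (hσ : ∀ k, 0 < σ k)
    (hM : M = U * Matrix.diagonal σ * Vᵀ)
    (Ω : Set (Fin m × Fin n)) (p : Fin m → Fin n → ℝ)
    (hp0 : ∀ i j, 0 < p i j) (hp1 : ∀ i j, p i j ≤ 1)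
    (hop : opNorm (fun X => PT U V (RΩ Ω p (PT U V X)) - PT U V X) < 1) :
    ∀ Z : Matrix (Fin m) (Fin n) ℝ, (∀ i j, (i, j) ∈ Ω → Z i j = 0) →
      frobNorm (PT U V Z)
        ≤ (Real.sqrt (1 - opNorm (fun X => PT U V (RΩ Ω p (PT U V X)) - PT U V X)))⁻¹
          * (⨆ i : Fin m, ⨆ j : Fin n, 1 / Real.sqrt (p i j))
          * nuclearNorm (Z - PT U V Z) :=
  stmt_9_general m n ρ U V hU hV Ω p hp0 hop
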